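/- Let n ≥ 5 be odd, ϑ := n·cos(π/n)/(1 + cos(π/n)), a := 1/ϑ, b := (n − ϑ)/(2ϑ²), and let X* be the real symmetric (1+n)×(1+n) matrix (indexed 0,1,…,n) with X*_{00} = 1, X*_{0j} = X*_{j0} = a for j ∈ {1,…,n}, and lower-right n×n block equal to the circulant matrix circ(u), where u ∈ ℝ^n has u_0 = a, u_1 = u_{n−1} = b and all other entries 0. If w_0, w_1, …, w_n are vectors in ℝ^d whose Gram matrix equals X* (i.e. ⟨w_i, w_j⟩ = X*_{ij} for all 0 ≤ i, j ≤ n), then d ≥ n − 2. (Hence any quantum realisation achieving the optimal quantum bound of the anti-hole inequality for odd n events requires dimension at least n − 2.) -/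

import Mathlib

/-
The vectors `w 1, …, w (n-2)` lie inside the circulant block away from its wrap-around
corner, so their Gram matrix is `b` times the tridiagonal Toeplitz matrix with diagonal
`2 cos (π / n)` (because `1/ϑ = 2 b cos (π / n)`) and off-diagonal `1`. Pairing a vanishing
combination `∑ g k • w (k+1)` with each `w (j+1)` shows that `g`, padded by zeros at both ends,
solves `g (j-1) + 2 cos (π / n) g j + g (j+1) = 0`, whose solutions vanishing at `0` are
multiples of `(-1)^k sin (k π / n)`. Since `sin ((n-1) π / n) ≠ 0`, the padding zero at
`n - 1` forces `g = 0`, so these `n - 2` vectors are linearly independent in `ℝ^d`.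
-/

open scoped RealInnerProductSpace

/-- The (unique) primal optimal solution `X*` of the Lovász theta SDP of the complement `C̄_n`
of the `n`-cycle (rows/columns indexed `0, 1, …, n`): with
`ϑ = n·cos(π/n)/(1 + cos(π/n))`, `a = 1/ϑ` and `b = (n - ϑ)/(2ϑ²)`, it has `X* 0 0 = 1`,
`X* 0 j = X* j 0 = a` for `j ∈ {1, …, n}`, and lower right `n × n` block the circulant matrix
`circ(u)` where `u 0 = a`, `u 1 = u (n-1) = b` and all other entries of `u` vanish. -/
noncomputable def antiHoleXstar (n : ℕ) : Matrix (Fin (n + 1)) (Fin (n + 1)) ℝ :=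
  fun i j =>
    let θ : ℝ := n * Real.cos (Real.pi / n) / (1 + Real.cos (Real.pi / n))
    let a : ℝ := 1 / θ
    let b : ℝ := (n - θ) / (2 * θ ^ 2)
    if i.val = 0 ∧ j.val = 0 then 1
    else if i.val = 0 ∨ j.val = 0 then a
    else
      -- entry of the circulant block at positions `i, j ∈ {1, …, n}`: `u ((j - i) mod n)`
      if (j.val + n - i.val) % n = 0 then a
      else if (j.val + n - i.val) % n = 1 ∨ (j.val + n - i.val) % n = n - 1 then b
      else 0

theorem mul_eq_mul_of_symm_three_term_recurrence {R : Type*} [CommRing R] [IsDomain R]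
    {a b : R} (hb : b ≠ 0) {u x : ℕ → R} {N : ℕ} (hu0 : u 0 = 0) (hx0 : x 0 = 0)
    (hu : ∀ j < N, b * u j + a * u (j + 1) + b * u (j + 2) = 0)
    (hx : ∀ j < N, b * x j + a * x (j + 1) + b * x (j + 2) = 0) :
    ∀ k ≤ N + 1, u k * x 1 = u 1 * x k := by
  intro k
  induction k using Nat.twoStepInduction with
  | zero => simp [hu0, hx0]
  | one => intro; ring
  | more j ih₀ ih₁ =>
    intro hj
    refine mul_left_cancel₀ hb ?_
    linear_combination x 1 * hu j (by omega) - u 1 * hx j (by omega) - b * ih₀ (by omega)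
      - a * ih₁ (by omega)

theorem tridiagonal_ite_eq {R : Type*} [AddZeroClass R] (a b : R) (k l : ℕ) :
    (if k = l then a else if k + 1 = l ∨ l + 1 = k then b else 0) =
      (if l + 1 = k then b else 0) + (if l + 1 = k + 1 then a else 0) +
        (if l + 1 = k + 2 then b else 0) := by
  split_ifs <;> first | omega | simp

theorem linearIndependent_of_inner_eq_tridiagonal {𝕜 E : Type*} [RCLike 𝕜]
    [NormedAddCommGroup E] [InnerProductSpace 𝕜 E] {m : ℕ} {v : Fin m → E} {a b : 𝕜}
    (hb : b ≠ 0)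
    (hv : ∀ k l : Fin m, inner 𝕜 (v k) (v l) =
      if (k : ℕ) = l then a else if (k : ℕ) + 1 = l ∨ (l : ℕ) + 1 = k then b else 0)
    {x : ℕ → 𝕜} (hx0 : x 0 = 0) (hx1 : x 1 ≠ 0)
    (hx : ∀ j < m, b * x j + a * x (j + 1) + b * x (j + 2) = 0) (hxm : x (m + 1) ≠ 0) :
    LinearIndependent 𝕜 v := by
  rw [Fintype.linearIndependent_iff]
  intro g hg
  set s : ℕ → 𝕜 := fun k => ∑ i : Fin m, if (i : ℕ) + 1 = k then g i else 0 with hs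
  have hs_succ (i : Fin m) : s (i + 1) = g i := by
    simp [hs, Fin.val_inj]
  have hs0 : s 0 = 0 := by simp [hs]
  have hsm : s (m + 1) = 0 := Finset.sum_eq_zero fun i _ => if_neg (by omega)
  have hrec : ∀ j < m, b * s j + a * s (j + 1) + b * s (j + 2) = 0 := by
    intro j hj
    have := congrArg (inner 𝕜 (v ⟨j, hj⟩)) hg
    simp only [inner_sum, inner_smul_right, hv, tridiagonal_ite_eq, inner_zero_right] at this
    simpa [hs, mul_add, add_mul, ite_mul, zero_mul, Finset.sum_add_distrib, Finset.mul_sum,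
      add_assoc, mul_comm (g _)] using this
  have hprop := mul_eq_mul_of_symm_three_term_recurrence hb hs0 hx0 hrec hx
  have hs1 : s 1 = 0 := by
    simpa [hsm, hxm] using (hprop (m + 1) le_rfl).symm
  intro i
  simpa [hs_succ, hs1, hx1] using hprop (i + 1) (by omega)

open Real

theorem neg_one_pow_mul_sin_recurrence (b φ : ℝ) (j : ℕ) :
    b * ((-1) ^ j * sin (j * φ)) + 2 * b * cos φ * ((-1) ^ (j + 1) * sin ((j + 1 : ℕ) * φ)) +
      b * ((-1) ^ (j + 2) * sin ((j + 2 : ℕ) * φ)) = 0 := by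
  have h₀ : (j : ℝ) * φ = (j + 1 : ℕ) * φ - φ := by push_cast; ring
  have h₂ : ((j + 2 : ℕ) : ℝ) * φ = (j + 1 : ℕ) * φ + φ := by push_cast; ring
  rw [h₀, h₂, sin_sub, sin_add]
  ring

theorem linearIndependent_of_inner_eq_tridiagonal_cos {E : Type*} [NormedAddCommGroup E]
    [InnerProductSpace ℝ E] {m : ℕ} {v : Fin m → E} {b φ : ℝ} (hb : b ≠ 0)
    (hv : ∀ k l : Fin m, ⟪v k, v l⟫ =
      if (k : ℕ) = l then 2 * b * cos φ else if (k : ℕ) + 1 = l ∨ (l : ℕ) + 1 = k then b else 0)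
    (hφ : sin φ ≠ 0) (hmφ : sin ((m + 1 : ℕ) * φ) ≠ 0) :
    LinearIndependent ℝ v :=
  linearIndependent_of_inner_eq_tridiagonal hb hv (x := fun k => (-1) ^ k * sin (k * φ))
    (by simp) (by simpa using hφ) (fun j _ => neg_one_pow_mul_sin_recurrence b φ j)
    (by simpa using hmφ)

noncomputable def lovaszThetaOddCycle (n : ℕ) : ℝ := n * cos (π / n) / (1 + cos (π / n))

theorem cos_pi_div_pos {n : ℕ} (hn : 2 < n) : 0 < cos (π / n) := by
  have hn' : (2 : ℝ) < n := by exact_mod_cast hn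
  apply cos_pos_of_mem_Ioo
  constructor
  · linarith [show 0 < π / n by positivity, pi_pos]
  · exact div_lt_div_of_pos_left pi_pos two_pos hn'

theorem lovaszThetaOddCycle_pos {n : ℕ} (hn : 2 < n) : 0 < lovaszThetaOddCycle n := by
  have := cos_pi_div_pos hn
  have : (0 : ℝ) < n := by exact_mod_cast (by omega : 0 < n)
  unfold lovaszThetaOddCycle
  positivity

theorem sub_lovaszThetaOddCycle {n : ℕ} (hn : 2 < n) :
    n - lovaszThetaOddCycle n = n / (1 + cos (π / n)) := by
  have := cos_pi_div_pos hn
  unfold lovaszThetaOddCycle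
  field_simp
  ring

theorem lovaszThetaOddCycle_lt {n : ℕ} (hn : 2 < n) : lovaszThetaOddCycle n < n := by
  have := cos_pi_div_pos hn
  have : (0 : ℝ) < n := by exact_mod_cast (by omega : 0 < n)
  rw [← sub_pos, sub_lovaszThetaOddCycle hn]
  positivity

theorem one_div_lovaszThetaOddCycle {n : ℕ} (hn : 2 < n) :
    1 / lovaszThetaOddCycle n =
      2 * ((n - lovaszThetaOddCycle n) / (2 * lovaszThetaOddCycle n ^ 2)) * cos (π / n) := by
  have := cos_pi_div_pos hn
  rw [sub_lovaszThetaOddCycle hn, lovaszThetaOddCycle]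
  field_simp

theorem antiHoleXstar_succ_succ {n k l : ℕ} (hk : k + 1 < n) (hl : l + 1 < n) :
    antiHoleXstar n ⟨k + 1, by omega⟩ ⟨l + 1, by omega⟩ =
      if k = l then 1 / lovaszThetaOddCycle n
      else if k + 1 = l ∨ l + 1 = k then
        (n - lovaszThetaOddCycle n) / (2 * lovaszThetaOddCycle n ^ 2)
      else 0 := by
  simp only [antiHoleXstar, lovaszThetaOddCycle, add_eq_zero, one_ne_zero, and_false,
    or_self, if_false]
  rcases le_or_gt k l with h | h
  · rw [show l + 1 + n - (k + 1) = l - k + n by omega, Nat.add_mod_right,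
      Nat.mod_eq_of_lt (by omega)]
    split_ifs <;> first | rfl | omega
  · rw [Nat.mod_eq_of_lt (by omega)]
    split_ifs <;> first | rfl | omega

theorem antiHole_dimension_lower_bound_general (n : ℕ) (hn : 5 ≤ n)
    (d : ℕ) (w : Fin (n + 1) → EuclideanSpace ℝ (Fin d))
    (hw : ∀ i j : Fin (n + 1), ⟪w i, w j⟫ = antiHoleXstar n i j) :
    n - 2 ≤ d := by
  have hn₂ : 2 < n := by omega
  obtain ⟨b, hb_def⟩ : ∃ b, (n - lovaszThetaOddCycle n) / (2 * lovaszThetaOddCycle n ^ 2) = b :=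
    ⟨_, rfl⟩
  have hb : 0 < b := hb_def ▸ div_pos (sub_pos.2 (lovaszThetaOddCycle_lt hn₂))
    (by have := lovaszThetaOddCycle_pos hn₂; positivity)
  have hv : ∀ k l : Fin (n - 2), ⟪w ⟨k + 1, by omega⟩, w ⟨l + 1, by omega⟩⟫ =
      if (k : ℕ) = l then 2 * b * cos (π / n)
      else if (k : ℕ) + 1 = l ∨ (l : ℕ) + 1 = k then b else 0 := by
    intro k l
    rw [hw, antiHoleXstar_succ_succ (by omega) (by omega), one_div_lovaszThetaOddCycle hn₂,
      hb_def]
  have hsin : 0 < sin (π / n) := sin_pos_of_pos_of_lt_pi (by positivity)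
    (div_lt_self pi_pos (by exact_mod_cast hn₂.trans' one_lt_two))
  have hsin_top : sin ((n - 2 + 1 : ℕ) * (π / n)) = sin (π / n) := by
    rw [show n - 2 + 1 = n - 1 by omega, Nat.cast_sub (by omega), ← sin_pi_sub]
    congr 1
    field_simp
    ring
  simpa using (linearIndependent_of_inner_eq_tridiagonal_cos hb.ne' hv hsin.ne'
    (hsin_top ▸ hsin.ne')).fintype_card_le_finrank

/-- If `w_0, w_1, …, w_n` are vectors of `ℝ^d` whose Gram matrix is the optimal solution `X*`
of the Lovász theta SDP of `C̄_n` (for odd `n ≥ 5`), then `d ≥ n - 2`: any quantum realisation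
achieving the optimal quantum bound of the anti-hole inequality needs dimension at least
`n - 2`. -/
theorem antiHole_dimension_lower_bound (n : ℕ) (hodd : Odd n) (hn : 5 ≤ n)
    (d : ℕ) (w : Fin (n + 1) → EuclideanSpace ℝ (Fin d))
    (hw : ∀ i j : Fin (n + 1), ⟪w i, w j⟫ = antiHoleXstar n i j) :
    n - 2 ≤ d :=
  antiHole_dimension_lower_bound_general n hn d w hw
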